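/- Let B be a finitely semi-graded algebra over a field K, let ε : B → K be the augmentation map (the projection onto B_0 = K), and view K as a left and right B-module via ε. Suppose that K admits a resolution by free semi-graded B-modules with homogeneous differentials, and that dim_K Ext_B^n(K, K) < ∞ for every n ≥ 0 (as holds when the Yoneda algebra E(B) = ⊕_{n≥0} Ext_B^n(K,K) is finitely generated). Then for every n ≥ 0 there is an isomorphism of K-vector spaces Tor_n^B(K, K) ≅ Ext_B^n(K, K). -/

import Mathlib

/-!
Identifying `Hom_B(B^{(X)}, K)` with `Hom_K(K^{(X)}, K)` makes the complex computing `Ext` the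
`K`-dual of the complex computing `Tor`. Over a field, dualizing commutes with subquotients: for
subspaces `R`, `Z` of `V`, the image of `R^⊥` in `V^* / Z^⊥` is the dual of the image of `Z` in
`V / R`. Hence `Ext^i ≅ (Tor_i)^*`; as `Ext^i` is finite-dimensional, so is `Tor_i`, and then
`Tor_i ≅ (Tor_i)^* ≅ Ext^i`.
-/

noncomputable section

/-- A finitely semi-graded (FSG) algebra structure on a `K`-algebra `B`. -/
structure FSGAlgebra (K : Type*) [Field K] (B : Type*) [Ring B] [Algebra K B] where
  gr : ℕ → Submodule K B
  internal : DirectSum.IsInternal gr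
  mul_mem : ∀ m n : ℕ, ∀ a ∈ gr m, ∀ b ∈ gr n, a * b ∈ ⨆ i ∈ Finset.Iic (m + n), gr i
  mul_mem' : ∀ p q : ℕ, 1 ≤ p → 1 ≤ q → ∀ a ∈ gr p, ∀ b ∈ gr q,
      a * b ∈ ⨆ i ∈ Finset.Icc 1 (p + q), gr i
  grade_zero : gr 0 = (1 : Submodule K B)
  finiteDim : ∀ n, FiniteDimensional K (gr n)
  gen : Algebra.adjoin K (gr 1 : Set B) = ⊤

/-- `B_m` for `m ∈ ℤ` (zero in negative degrees); used for degree shifts. -/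
def FSGAlgebra.zgr {K B : Type*} [Field K] [Ring B] [Algebra K B]
    (S : FSGAlgebra K B) (m : ℤ) : Submodule K B :=
  if 0 ≤ m then S.gr m.toNat else ⊥

variable {K B : Type*} [Field K] [Ring B] [Algebra K B] {X : ℕ → Type*}

/-- The differential of the complex `Hom_B(B^{(X_•)}, K)`, where `Hom_B(B^{(X_i)}, K)`
is identified with `X_i → K`:  `(g : X_i → K) ↦ (x ↦ Σ_y ε((d_i eₓ)_y)·g(y))`. -/
def extD (ε : B →+* K) (d : ∀ i : ℕ, (X (i + 1) →₀ B) →ₗ[B] (X i →₀ B)) (i : ℕ) :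
    (X i → K) →ₗ[K] (X (i + 1) → K) :=
  LinearMap.pi fun x =>
    (d i (Finsupp.single x 1)).sum fun y c => ε c • LinearMap.proj y

/-- The coboundaries: image of the previous differential (`0` in degree `0`). -/
def extBdry (ε : B →+* K) (d : ∀ i : ℕ, (X (i + 1) →₀ B) →ₗ[B] (X i →₀ B)) :
    ∀ i : ℕ, Submodule K (X i → K)
  | 0 => ⊥
  | (i + 1) => LinearMap.range (extD ε d i)

/-- `Ext_B^i(K,K)` computed from the free resolution `(X_•, d)`:
the homology `ker(d_{i+1}^*)/im(d_i^*)`, realized as the image of the cocycles in the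
quotient by the coboundaries. -/
abbrev extSpace (ε : B →+* K) (d : ∀ i : ℕ, (X (i + 1) →₀ B) →ₗ[B] (X i →₀ B)) (i : ℕ) :
    Type _ :=
  ↥((LinearMap.ker (extD ε d i)).map (extBdry ε d i).mkQ)

/-- The differential of the complex `K ⊗_B B^{(X_•)}`, where `K ⊗_B B^{(X_i)}` is
identified with `X_i →₀ K`. -/
def torD (ε : B →+* K) (d : ∀ i : ℕ, (X (i + 1) →₀ B) →ₗ[B] (X i →₀ B)) (i : ℕ) :
    (X (i + 1) →₀ K) →ₗ[K] (X i →₀ K) :=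
  Finsupp.lsum K fun x =>
    LinearMap.toSpanSingleton K (X i →₀ K)
      (Finsupp.mapRange ε (map_zero ε) (d i (Finsupp.single x 1)))

/-- The cycles: kernel of the differential (everything in degree `0`). -/
def torCyc (ε : B →+* K) (d : ∀ i : ℕ, (X (i + 1) →₀ B) →ₗ[B] (X i →₀ B)) :
    ∀ i : ℕ, Submodule K (X i →₀ K)
  | 0 => ⊤
  | (i + 1) => LinearMap.ker (torD ε d i)

/-- `Tor_i^B(K,K)` computed from the free resolution `(X_•, d)`. -/
abbrev torSpace (ε : B →+* K) (d : ∀ i : ℕ, (X (i + 1) →₀ B) →ₗ[B] (X i →₀ B)) (i : ℕ) :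
    Type _ :=
  ↥((torCyc ε d i).map (LinearMap.range (torD ε d i)).mkQ)

namespace Submodule

variable {R M M' : Type*} [Ring R] [AddCommGroup M] [AddCommGroup M'] [Module R M] [Module R M']

def mapMkQEquiv (S q : Submodule R M) : S.map q.mkQ ≃ₗ[R] S ⧸ q.comap S.subtype :=
  (LinearEquiv.ofEq _ _ (by rw [LinearMap.range_comp, range_subtype])).trans <|
    (q.mkQ ∘ₗ S.subtype).quotKerEquivRange.symm.trans <|
      quotEquivOfEq _ _ (by rw [LinearMap.ker_comp, ker_mkQ])

def mapMkQEquivOfMapEq (e : M ≃ₗ[R] M') {S q : Submodule R M} {S' q' : Submodule R M'}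
    (hS : S.map e.toLinearMap = S') (hq : q.map e.toLinearMap = q') :
    S.map q.mkQ ≃ₗ[R] S'.map q'.mkQ :=
  let E := Quotient.equiv q q' e hq
  have hE : E.toLinearMap ∘ₗ q.mkQ = q'.mkQ ∘ₗ e.toLinearMap := by
    ext x; rfl
  (E.submoduleMap (S.map q.mkQ)).trans <|
    LinearEquiv.ofEq _ _ (by rw [← map_comp, hE, map_comp, hS])

end Submodule

namespace Subspace

open Module Submodule

variable {K V : Type*} [Field K] [AddCommGroup V] [Module K V]

theorem ker_dualRestrict_map_mkQ_comp_dualCopairing (R Z : Subspace K V) :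
    LinearMap.ker ((Z.map R.mkQ).dualRestrict ∘ₗ R.dualCopairing) =
      Z.dualAnnihilator.comap R.dualAnnihilator.subtype := by
  ext φ
  simp only [LinearMap.mem_ker, mem_comap, subtype_apply, mem_dualAnnihilator]
  constructor
  · intro h z hz
    exact DFunLike.congr_fun h ⟨R.mkQ z, mem_map_of_mem hz⟩
  · intro h
    ext ⟨_, z, hz, rfl⟩
    exact h z hz

def dualAnnihilatorMapMkQEquiv (R Z : Subspace K V) :
    R.dualAnnihilator.map Z.dualAnnihilator.mkQ ≃ₗ[K] Dual K (Z.map R.mkQ) :=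
  (R.dualAnnihilator.mapMkQEquiv Z.dualAnnihilator).trans <|
    (quotEquivOfEq _ _ (ker_dualRestrict_map_mkQ_comp_dualCopairing R Z).symm).trans <|
      LinearMap.quotKerEquivOfSurjective _ <|
        dualRestrict_surjective.comp R.dualQuotEquivDualAnnihilator.symm.surjective

end Subspace

section Duality

open Module LinearMap

-- Fresh variables, so that the ambient `[Algebra K B]` is not an argument of these results.
variable {K B : Type*} [Field K] [Ring B] {X : ℕ → Type*}
  (ε : B →+* K) (d : ∀ i : ℕ, (X (i + 1) →₀ B) →ₗ[B] (X i →₀ B))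

theorem llift_comp_extD (i : ℕ) :
    (Finsupp.llift K K K (X (i + 1))).toLinearMap ∘ₗ extD ε d i =
      (torD ε d i).dualMap ∘ₗ (Finsupp.llift K K K (X i)).toLinearMap := by
  ext g : 1
  apply Finsupp.lhom_ext
  intro x c
  simp only [LinearMap.comp_apply, LinearEquiv.coe_coe, Finsupp.llift_apply, Finsupp.lift_apply,
    LinearMap.dualMap_apply, torD, Finsupp.lsum_single, LinearMap.toSpanSingleton_apply, extD,
    LinearMap.pi_apply]
  rw [Finsupp.sum_single_index (by simp), Finsupp.sum_smul_index' (by simp),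
    Finsupp.sum_mapRange_index (by simp), LinearMap.finsupp_sum_apply, Finsupp.smul_sum]
  refine Finsupp.sum_congr fun y _ => ?_
  simp [smul_eq_mul, mul_assoc]

theorem map_llift_ker_extD (i : ℕ) :
    (ker (extD ε d i)).map (Finsupp.llift K K K (X i)).toLinearMap =
      (range (torD ε d i)).dualAnnihilator := by
  have h := congrArg ker (llift_comp_extD ε d i)
  rw [LinearEquiv.ker_comp, ker_comp] at h
  rw [h, Submodule.map_comap_eq_of_surjective (Finsupp.llift K K K (X i)).surjective,
    ker_dualMap_eq_dualAnnihilator_range]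

theorem map_llift_extBdry (i : ℕ) :
    (extBdry ε d i).map (Finsupp.llift K K K (X i)).toLinearMap =
      (torCyc ε d i).dualAnnihilator := by
  cases i with
  | zero => simp [extBdry, torCyc]
  | succ i =>
    rw [extBdry, torCyc, ← range_comp, llift_comp_extD,
      range_comp_of_range_eq_top _ (range_eq_top.2 (Finsupp.llift K K K (X i)).surjective),
      range_dualMap_eq_dualAnnihilator_ker]

def extSpaceEquivDualTorSpace (i : ℕ) : extSpace ε d i ≃ₗ[K] Dual K (torSpace ε d i) :=
  (Submodule.mapMkQEquivOfMapEq (Finsupp.llift K K K (X i)) (map_llift_ker_extD ε d i)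
    (map_llift_extBdry ε d i)).trans <|
      Subspace.dualAnnihilatorMapMkQEquiv (range (torD ε d i)) (torCyc ε d i)

end Duality

theorem stmt13_general (ε : B →+* K)
    -- a resolution of K by free left B-modules B^{(X_i)}
    (d : ∀ i : ℕ, (X (i + 1) →₀ B) →ₗ[B] (X i →₀ B))
    -- dim_K Ext^i < ∞ (as holds when the Yoneda algebra is finitely generated)
    (hfd : ∀ i : ℕ, FiniteDimensional K (extSpace ε d i)) :
    ∀ i : ℕ, Nonempty (torSpace ε d i ≃ₗ[K] extSpace ε d i) := by
  intro i
  let E := extSpaceEquivDualTorSpace ε d i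
  have : FiniteDimensional K (torSpace ε d i) :=
    (Module.finite_dual_iff K).1 (Module.Finite.equiv E)
  exact ⟨(Module.finBasis K (torSpace ε d i)).toDualEquiv.trans E.symm⟩

/-- Theorem: let `B` be an FSG algebra with augmentation `ε : B → K`, and suppose `K`
admits a resolution `⋯ → B^{(X_1)} → B^{(X_0)} → K → 0` by free semi-graded `B`-modules
with homogeneous differentials, and that `dim_K Ext_B^i(K,K) < ∞` for all `i`.  Then
`Tor_i^B(K,K) ≅ Ext_B^i(K,K)` as `K`-vector spaces for every `i ≥ 0`. -/
theorem stmt13 (S : FSGAlgebra K B) (ε : B →+* K)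
    -- ε is the augmentation: it restricts to the iso B₀ ≅ K and kills B_n, n ≥ 1
    (hεa : ∀ l : K, ε (algebraMap K B l) = l)
    (hεg : ∀ n : ℕ, 1 ≤ n → ∀ x ∈ S.gr n, ε x = 0)
    -- a resolution of K by free left B-modules B^{(X_i)}
    (d : ∀ i : ℕ, (X (i + 1) →₀ B) →ₗ[B] (X i →₀ B))
    (e : (X 0 →₀ B) →+ K)
    (he : ∀ (c : B) (v : X 0 →₀ B), e (c • v) = ε c * e v)
    (hsurj : Function.Surjective e)
    (hex0 : Function.Exact ⇑(d 0) ⇑e)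
    (hex : ∀ i : ℕ, Function.Exact ⇑(d (i + 1)) ⇑(d i))
    -- the resolution is semi-graded (free on homogeneous generators of degrees w) with
    -- homogeneous differentials
    (w : ∀ i : ℕ, X i → ℤ)
    (hdhom : ∀ (i : ℕ) (ν : ℤ) (c : X (i + 1) →₀ B),
      (∀ x, c x ∈ S.zgr (ν - w (i + 1) x)) → ∀ y, d i c y ∈ S.zgr (ν - w i y))
    (hehom : ∀ (ν : ℤ) (c : X 0 →₀ B),
      (∀ x, c x ∈ S.zgr (ν - w 0 x)) → ν ≠ 0 → e c = 0)
    -- dim_K Ext^i < ∞ (as holds when the Yoneda algebra is finitely generated)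
    (hfd : ∀ i : ℕ, FiniteDimensional K (extSpace ε d i)) :
    ∀ i : ℕ, Nonempty (torSpace ε d i ≃ₗ[K] extSpace ε d i) :=
  stmt13_general ε d hfd
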